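/- arXiv:1406.7702 — 2 statements merged into one kernel-verified Lean document; each statement's English description precedes it below -/
import Mathlib

section
/- Let L be a complete residuated lattice and Y a nonempty set. For L-sets A,B,M : Y → L let S(A,M) = ⨅_{y∈Y} (A(y) → M(y)) and ||A ⇒ B||_M = S(A,M) → S(B,M). Let T be a map assigning to each pair (A,B) of L-sets a degree T(A ⇒ B) ∈ L, let Mod(T) = {M : Y → L | T(A ⇒ B) ≤ ||A ⇒ B||_M for all A,B}, and let ||A ⇒ B||_T = ⨅_{M ∈ Mod(T)} ||A ⇒ B||_M. Then for all A,B,C : Y → L, ||A ⇒ B||_T ⊗ ||B ⇒ C||_T ≤ ||A ⇒ C||_T. -/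
/-- A complete (integral commutative) residuated lattice: a complete lattice
with a commutative monoid operation `otimes` whose unit is the top element,
together with a residuum `rimp` satisfying the adjointness property. -/
class CompleteResiduatedLattice (L : Type*) extends CompleteLattice L where
  otimes : L → L → L
  rimp : L → L → L
  otimes_comm : ∀ a b : L, otimes a b = otimes b a
  otimes_assoc : ∀ a b c : L, otimes (otimes a b) c = otimes a (otimes b c)
  otimes_top : ∀ a : L, otimes a ⊤ = a
  adjoint : ∀ a b c : L, otimes a b ≤ c ↔ a ≤ rimp b c

open CompleteResiduatedLattice

local infixr:70 " ⊛ " => CompleteResiduatedLattice.otimes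

variable {L : Type*} [CompleteResiduatedLattice L] {Y : Type*}

/-- The degree `S(A,M)` to which the L-set `A` is included in the L-set `M`. -/
def Ssub (A M : Y → L) : L := ⨅ y, rimp (A y) (M y)

/-- The degree `||A ⇒ B||_M` to which the fuzzy attribute implication
`A ⇒ B` is true in the L-set `M`. -/
def faiDeg (A B M : Y → L) : L := rimp (Ssub A M) (Ssub B M)

/-- The set `Mod(T)` of all models of an L-set `T` of fuzzy attribute
implications. -/
def faiMod (T : (Y → L) → (Y → L) → L) : Set (Y → L) :=
  {M | ∀ A B, T A B ≤ faiDeg A B M}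

/-- The degree `||A ⇒ B||_T` to which `A ⇒ B` is semantically entailed
by `T`. -/
def faiDegT (T : (Y → L) → (Y → L) → L) (A B : Y → L) : L :=
  ⨅ M ∈ faiMod T, faiDeg A B M

namespace CompleteResiduatedLattice

theorem rimp_otimes_le (a b : L) : rimp a b ⊛ a ≤ b :=
  (adjoint _ _ _).2 le_rfl

theorem otimes_le_otimes_right {a b : L} (h : a ≤ b) (c : L) : a ⊛ c ≤ b ⊛ c :=
  (adjoint _ _ _).2 (h.trans ((adjoint _ _ _).1 le_rfl))

theorem otimes_le_otimes_left {a b : L} (h : a ≤ b) (c : L) : c ⊛ a ≤ c ⊛ b := by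
  simpa only [otimes_comm c] using otimes_le_otimes_right h c

theorem otimes_le_otimes {a b c d : L} (hab : a ≤ b) (hcd : c ≤ d) : a ⊛ c ≤ b ⊛ d :=
  (otimes_le_otimes_right hab c).trans (otimes_le_otimes_left hcd b)

theorem rimp_otimes_rimp_le (a b c : L) : rimp a b ⊛ rimp b c ≤ rimp a c := by
  rw [← adjoint]
  calc (rimp a b ⊛ rimp b c) ⊛ a = rimp b c ⊛ (rimp a b ⊛ a) := by
        rw [otimes_comm (rimp a b), otimes_assoc]
    _ ≤ rimp b c ⊛ b := otimes_le_otimes_left (rimp_otimes_le a b) _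
    _ ≤ c := rimp_otimes_le b c

end CompleteResiduatedLattice

theorem faiDeg_otimes_faiDeg_le (A B C M : Y → L) :
    faiDeg A B M ⊛ faiDeg B C M ≤ faiDeg A C M :=
  rimp_otimes_rimp_le _ _ _

theorem faiDegT_le_faiDeg {T : (Y → L) → (Y → L) → L} {M : Y → L} (hM : M ∈ faiMod T)
    (A B : Y → L) : faiDegT T A B ≤ faiDeg A B M :=
  biInf_le _ hM

theorem stmt3_general {L : Type*} [CompleteResiduatedLattice L] {Y : Type*}
    (T : (Y → L) → (Y → L) → L) (A B C : Y → L) :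
    faiDegT T A B ⊛ faiDegT T B C ≤ faiDegT T A C :=
  le_iInf₂ fun M hM =>
    (otimes_le_otimes (faiDegT_le_faiDeg hM A B) (faiDegT_le_faiDeg hM B C)).trans
      (faiDeg_otimes_faiDeg_le A B C M)

/-- Semantic entailment of fuzzy attribute implications is `⊗`-transitive:
`||A ⇒ B||_T ⊗ ||B ⇒ C||_T ≤ ||A ⇒ C||_T`. -/
theorem stmt3 {L : Type*} [CompleteResiduatedLattice L] {Y : Type*} [Nonempty Y]
    (T : (Y → L) → (Y → L) → L) (A B C : Y → L) :
    faiDegT T A B ⊛ faiDegT T B C ≤ faiDegT T A C :=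
  stmt3_general T A B C
end

section
/- Let L be a complete residuated lattice, 𝓛 a first-order language of function symbols, and M an algebra with L-order, i.e., an 𝓛-structure together with a binary L-relation ≼^M that is reflexive (a ≼^M a = 1), ⊗-transitive, compatible with the functions of M, and separated (for distinct a,b, not both a ≼^M b = 1 and b ≼^M a = 1). Let Q be a compatible L-preorder on M (≼^M pointwise below Q, Q ⊗-transitive, Q compatible with the functions of M). Consider the quotient M/Q of M by the equivalence a ∼ b iff Q(a,b) = Q(b,a) = 1, with functions f^{M/Q}([a₁],…,[aₙ]) = [f^M(a₁,…,aₙ)] and L-relation [a] ≼^{M/Q} [b] = Q(a,b). Then M/Q is again an algebra with L-order: ≼^{M/Q} is well defined, reflexive, ⊗-transitive, compatible with the functions f^{M/Q}, and separated (for distinct classes x,y, not both x ≼^{M/Q} y = 1 and y ≼^{M/Q} x = 1). -/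
open FirstOrder FirstOrder.Language FirstOrder.Language.Structure

open CompleteResiduatedLattice

local infixr:70 " ⊛ " => CompleteResiduatedLattice.otimes

/-- The `⊗`-product `g 0 ⊗ g 1 ⊗ ⋯ ⊗ g (n-1)` of a finite tuple of degrees. -/
def bigMul {L : Type*} [CompleteResiduatedLattice L] : {n : ℕ} → (Fin n → L) → L
  | 0, _ => ⊤
  | _ + 1, g => CompleteResiduatedLattice.otimes (g 0) (bigMul fun i => g i.succ)

/-!
Because `⊤` is the unit of `⊗`, transitivity of `Q` gives `Q a b ≤ Q a' b` as soon as
`Q a' a = ⊤`, so `Q` is constant on `∼`-classes and descends to `M/Q`; the same argument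
with `Q a a = ⊤` shows that `∼` is the kernel of the induced relation, which is therefore
separated. Compatibility of `Q` turns `aᵢ ∼ bᵢ` into `f(a) ∼ f(b)`, so the functions
descend as well, and all remaining laws are inherited from `Q` on representatives.
-/

namespace CompleteResiduatedLattice

variable {L : Type*} [CompleteResiduatedLattice L]

theorem top_otimes (a : L) : ⊤ ⊛ a = a :=
  (otimes_comm _ _).trans (otimes_top a)

theorem bigMul_eq_top : ∀ {n : ℕ} {g : Fin n → L}, (∀ i, g i = ⊤) → bigMul g = ⊤
  | 0, _, _ => rfl
  | _ + 1, _, h => by rw [bigMul, h 0, bigMul_eq_top fun i => h i.succ, otimes_top]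

end CompleteResiduatedLattice

namespace LRel

variable {L : Type*} [CompleteResiduatedLattice L] {M : Type*}

def IsRefl (Q : M → M → L) : Prop := ∀ a, Q a a = ⊤

def IsTrans (Q : M → M → L) : Prop := ∀ a b c, Q a b ⊛ Q b c ≤ Q a c

def IsCompatible (𝓛 : Language) [𝓛.Structure M] (Q : M → M → L) : Prop :=
  ∀ (n : ℕ) (f : 𝓛.Functions n) (a b : Fin n → M),
    bigMul (fun i => Q (a i) (b i)) ≤ Q (funMap f a) (funMap f b)

def kernel (Q : M → M → L) (a b : M) : Prop := Q a b = ⊤ ∧ Q b a = ⊤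

variable {Q : M → M → L}

theorem IsTrans.le_of_top_left (hQ : IsTrans Q) {a a' : M} (h : Q a' a = ⊤) (b : M) :
    Q a b ≤ Q a' b :=
  calc Q a b = Q a' a ⊛ Q a b := by rw [h, top_otimes]
    _ ≤ Q a' b := hQ _ _ _

theorem IsTrans.le_of_top_right (hQ : IsTrans Q) {b b' : M} (h : Q b b' = ⊤) (a : M) :
    Q a b ≤ Q a b' :=
  calc Q a b = Q a b ⊛ Q b b' := by rw [h, otimes_top]
    _ ≤ Q a b' := hQ _ _ _

noncomputable def quotRel (hQ : IsTrans Q) : Quot (kernel Q) → Quot (kernel Q) → L :=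
  Quot.lift₂ Q
    (fun a _ _ h => (hQ.le_of_top_right h.1 a).antisymm (hQ.le_of_top_right h.2 a))
    (fun _ _ b h => (hQ.le_of_top_left h.2 b).antisymm (hQ.le_of_top_left h.1 b))

theorem quotRel_out (hQ : IsTrans Q) (x y : Quot (kernel Q)) :
    quotRel hQ x y = Q x.out y.out := by
  conv_lhs => rw [← x.out_eq, ← y.out_eq]
  rfl

theorem quotRel_isRefl (hQ : IsTrans Q) (hQrefl : IsRefl Q) : IsRefl (quotRel hQ) := by
  intro x
  induction x using Quot.ind
  exact hQrefl _

theorem quotRel_isTrans (hQ : IsTrans Q) : IsTrans (quotRel hQ) := by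
  intro x y z
  induction x using Quot.ind
  induction y using Quot.ind
  induction z using Quot.ind
  exact hQ _ _ _

theorem quotRel_separated (hQ : IsTrans Q) (x y : Quot (kernel Q)) (hxy : x ≠ y) :
    quotRel hQ x y ≠ ⊤ ∨ quotRel hQ y x ≠ ⊤ := by
  induction x using Quot.ind
  induction y using Quot.ind
  rw [← not_and_or]
  exact fun h => hxy (Quot.sound h)

theorem kernel_of_mk_eq (hQ : IsTrans Q) (hQrefl : IsRefl Q) {a b : M}
    (h : Quot.mk (kernel Q) a = Quot.mk (kernel Q) b) : kernel Q a b := by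
  have hab : Q a b = Q a a := congrArg (quotRel hQ (Quot.mk _ a)) h.symm
  have hba : Q b a = Q a a := congrArg (quotRel hQ · (Quot.mk _ a)) h.symm
  exact ⟨hab.trans (hQrefl a), hba.trans (hQrefl a)⟩

section Functions

variable {𝓛 : Language} [𝓛.Structure M]

theorem IsCompatible.funMap_kernel (hQ : IsCompatible 𝓛 Q) {n : ℕ} (f : 𝓛.Functions n)
    {a b : Fin n → M} (h : ∀ i, kernel Q (a i) (b i)) : kernel Q (funMap f a) (funMap f b) :=
  ⟨top_le_iff.mp (bigMul_eq_top (fun i => (h i).1) ▸ hQ n f a b),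
    top_le_iff.mp (bigMul_eq_top (fun i => (h i).2) ▸ hQ n f b a)⟩

variable (Q) in
noncomputable def quotFunMap (n : ℕ) (f : 𝓛.Functions n) (x : Fin n → Quot (kernel Q)) :
    Quot (kernel Q) :=
  Quot.mk _ (funMap f fun i => (x i).out)

theorem quotFunMap_mk (hQ : IsTrans Q) (hQrefl : IsRefl Q) (hQcomp : IsCompatible 𝓛 Q)
    {n : ℕ} (f : 𝓛.Functions n) (a : Fin n → M) :
    quotFunMap Q n f (fun i => Quot.mk _ (a i)) = Quot.mk _ (funMap f a) :=
  Quot.sound <| hQcomp.funMap_kernel f fun _ => kernel_of_mk_eq hQ hQrefl (Quot.out_eq _)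

theorem bigMul_quotRel_le (hQ : IsTrans Q) (hQcomp : IsCompatible 𝓛 Q) {n : ℕ}
    (f : 𝓛.Functions n) (x y : Fin n → Quot (kernel Q)) :
    bigMul (fun i => quotRel hQ (x i) (y i)) ≤
      quotRel hQ (quotFunMap Q n f x) (quotFunMap Q n f y) := by
  simp only [quotRel_out hQ (x _)]
  exact hQcomp n f _ _

end Functions

end LRel

open LRel in
theorem stmt8_general {L : Type*} [CompleteResiduatedLattice L]
    (𝓛 : Language) (M : Type*) [𝓛.Structure M]
    (le : M → M → L)
    (hrefl : ∀ a : M, le a a = ⊤)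
    (Q : M → M → L)
    (hQle : ∀ a b : M, le a b ≤ Q a b)
    (hQtrans : ∀ a b c : M, Q a b ⊛ Q b c ≤ Q a c)
    (hQcomp : ∀ (n : ℕ) (f : 𝓛.Functions n) (a b : Fin n → M),
      bigMul (fun i => Q (a i) (b i)) ≤ Q (funMap f a) (funMap f b)) :
    let r : M → M → Prop := fun a b => Q a b = ⊤ ∧ Q b a = ⊤
    ∃ (le' : Quot r → Quot r → L)
      (F : (n : ℕ) → 𝓛.Functions n → (Fin n → Quot r) → Quot r),
      (∀ a b : M, le' (Quot.mk r a) (Quot.mk r b) = Q a b) ∧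
      (∀ (n : ℕ) (f : 𝓛.Functions n) (a : Fin n → M),
        F n f (fun i => Quot.mk r (a i)) = Quot.mk r (funMap f a)) ∧
      (∀ x : Quot r, le' x x = ⊤) ∧
      (∀ x y z : Quot r, le' x y ⊛ le' y z ≤ le' x z) ∧
      (∀ (n : ℕ) (f : 𝓛.Functions n) (x y : Fin n → Quot r),
        bigMul (fun i => le' (x i) (y i)) ≤ le' (F n f x) (F n f y)) ∧
      (∀ x y : Quot r, x ≠ y → le' x y ≠ ⊤ ∨ le' y x ≠ ⊤) := by
  have hQrefl : IsRefl Q := fun a => top_le_iff.mp (hrefl a ▸ hQle a a)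
  exact ⟨quotRel hQtrans, quotFunMap Q, fun _ _ => rfl,
    fun _ => quotFunMap_mk hQtrans hQrefl hQcomp, quotRel_isRefl hQtrans hQrefl,
    quotRel_isTrans hQtrans, fun _ => bigMul_quotRel_le hQtrans hQcomp,
    quotRel_separated hQtrans⟩

/-- The factor algebra `M/Q` of an algebra with L-order modulo a compatible
L-preorder `Q` is again an algebra with L-order: on the quotient by the
equivalence `a ∼ b` iff `Q(a,b) = Q(b,a) = 1`, the relation
`[a] ≼ [b] = Q(a,b)` and the componentwise functions are well defined, and
the relation is reflexive, `⊗`-transitive, compatible with the quotient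
functions, and separated. -/
theorem stmt8 {L : Type*} [CompleteResiduatedLattice L]
    (𝓛 : Language) (M : Type*) [𝓛.Structure M]
    (le : M → M → L)
    (hrefl : ∀ a : M, le a a = ⊤)
    (htrans : ∀ a b c : M, le a b ⊛ le b c ≤ le a c)
    (hcomp : ∀ (n : ℕ) (f : 𝓛.Functions n) (a b : Fin n → M),
      bigMul (fun i => le (a i) (b i)) ≤ le (funMap f a) (funMap f b))
    (hsep : ∀ a b : M, a ≠ b → le a b ≠ ⊤ ∨ le b a ≠ ⊤)
    (Q : M → M → L)
    (hQle : ∀ a b : M, le a b ≤ Q a b)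
    (hQtrans : ∀ a b c : M, Q a b ⊛ Q b c ≤ Q a c)
    (hQcomp : ∀ (n : ℕ) (f : 𝓛.Functions n) (a b : Fin n → M),
      bigMul (fun i => Q (a i) (b i)) ≤ Q (funMap f a) (funMap f b)) :
    let r : M → M → Prop := fun a b => Q a b = ⊤ ∧ Q b a = ⊤
    ∃ (le' : Quot r → Quot r → L)
      (F : (n : ℕ) → 𝓛.Functions n → (Fin n → Quot r) → Quot r),
      (∀ a b : M, le' (Quot.mk r a) (Quot.mk r b) = Q a b) ∧
      (∀ (n : ℕ) (f : 𝓛.Functions n) (a : Fin n → M),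
        F n f (fun i => Quot.mk r (a i)) = Quot.mk r (funMap f a)) ∧
      (∀ x : Quot r, le' x x = ⊤) ∧
      (∀ x y z : Quot r, le' x y ⊛ le' y z ≤ le' x z) ∧
      (∀ (n : ℕ) (f : 𝓛.Functions n) (x y : Fin n → Quot r),
        bigMul (fun i => le' (x i) (y i)) ≤ le' (F n f x) (F n f y)) ∧
      (∀ x y : Quot r, x ≠ y → le' x y ≠ ⊤ ∨ le' y x ≠ ⊤) :=
  stmt8_general 𝓛 M le hrefl Q hQle hQtrans hQcomp
end
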